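/- arXiv:1108.2848 — 8 statements merged into one kernel-verified Lean document; each statement's English description precedes it below -/
import Mathlib

section
/- The semigroup I∞↗(ℕ) of cofinite monotone partial bijections of ℕ is simple: for every two elements α and β of I∞↗(ℕ) there exist elements γ and δ of I∞↗(ℕ) such that γ * α * δ = β (hence I·α·I = I for every α ∈ I). -/
open Set

/-- Cofinite monotone partial bijections of `ℕ`. -/
def IsCMPB (e : PartialEquiv ℕ ℕ) : Prop :=
  e.sourceᶜ.Finite ∧ e.targetᶜ.Finite ∧
    ∀ ⦃m n : ℕ⦄, m ∈ e.source → n ∈ e.source → m < n → e m < e n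

lemma IsCMPB.symm {e : PartialEquiv ℕ ℕ} (he : IsCMPB e) : IsCMPB e.symm := by
  obtain ⟨h1, h2, h3⟩ := he
  refine ⟨by simpa using h2, by simpa using h1, ?_⟩
  intro m n hm hn hmn
  have hm' : e.symm m ∈ e.source := e.map_target (by simpa using hm)
  have hn' : e.symm n ∈ e.source := e.map_target (by simpa using hn)
  have hEm : e (e.symm m) = m := e.right_inv hm
  have hEn : e (e.symm n) = n := e.right_inv hn
  rcases lt_trichotomy (e.symm m) (e.symm n) with h | h | h
  · exact h
  · exfalso
    have : m = n := by rw [← hEm, ← hEn, h]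
    omega
  · exfalso
    have := h3 hn' hm' h
    rw [hEm, hEn] at this
    omega

private lemma trans_source_compl_finite {e f : PartialEquiv ℕ ℕ}
    (he : e.sourceᶜ.Finite) (hf : f.sourceᶜ.Finite) : ((e.trans f).source)ᶜ.Finite := by
  rw [PartialEquiv.trans_source]
  have hT : (e.source ∩ e ⁻¹' f.sourceᶜ).Finite := by
    apply Set.Finite.of_finite_image ?_ (e.injOn.mono inter_subset_left)
    apply hf.subset
    rintro _ ⟨x, ⟨_, hx2⟩, rfl⟩
    exact hx2
  apply (he.union hT).subset
  intro x hx
  simp only [mem_compl_iff, mem_inter_iff, not_and_or] at hx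
  by_cases h : x ∈ e.source
  · rcases hx with h' | h'
    · exact absurd h h'
    · exact Or.inr ⟨h, h'⟩
  · exact Or.inl h

lemma IsCMPB.trans {e f : PartialEquiv ℕ ℕ} (he : IsCMPB e) (hf : IsCMPB f) :
    IsCMPB (e.trans f) := by
  refine ⟨trans_source_compl_finite he.1 hf.1, ?_, ?_⟩
  · have h : (((e.trans f).symm).source)ᶜ.Finite := by
      rw [PartialEquiv.trans_symm_eq_symm_trans_symm]
      exact trans_source_compl_finite (by simpa using hf.2.1) (by simpa using he.2.1)
    simpa using h
  · intro m n hm hn hmn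
    rw [PartialEquiv.trans_source] at hm hn
    show f (e m) < f (e n)
    exact hf.2.2 hm.2 hn.2 (he.2.2 hm.1 hn.1 hmn)

lemma isCMPB_congr {e e' : PartialEquiv ℕ ℕ} (h : e ≈ e') : IsCMPB e ↔ IsCMPB e' := by
  constructor <;> intro ⟨h1, h2, h3⟩
  · refine ⟨(PartialEquiv.EqOnSource.source_eq h) ▸ h1, (PartialEquiv.EqOnSource.target_eq h) ▸ h2, ?_⟩
    intro m n hm hn hmn
    rw [← (PartialEquiv.EqOnSource.source_eq h)] at hm hn
    rw [← (PartialEquiv.EqOnSource.eqOn h) hm, ← (PartialEquiv.EqOnSource.eqOn h) hn]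
    exact h3 hm hn hmn
  · refine ⟨(PartialEquiv.EqOnSource.source_eq h) ▸ h1, (PartialEquiv.EqOnSource.target_eq h) ▸ h2, ?_⟩
    intro m n hm hn hmn
    rw [(PartialEquiv.EqOnSource.eqOn h) hm, (PartialEquiv.EqOnSource.eqOn h) hn]
    exact h3 ((PartialEquiv.EqOnSource.source_eq h) ▸ hm) ((PartialEquiv.EqOnSource.source_eq h) ▸ hn) hmn

/-- The type of partial bijections of `ℕ` up to equality on the source. -/
abbrev PEQ : Type := Quotient (PartialEquiv.eqOnSourceSetoid (α := ℕ) (β := ℕ))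

instance : Mul PEQ :=
  ⟨Quotient.map₂ PartialEquiv.trans fun _ _ h _ _ h' => PartialEquiv.EqOnSource.trans' h h'⟩

lemma PEQ.mk_mul (e f : PartialEquiv ℕ ℕ) : (⟦e⟧ * ⟦f⟧ : PEQ) = ⟦e.trans f⟧ := rfl

instance : Semigroup PEQ where
  mul_assoc a b c := by
    induction a using Quotient.inductionOn with | h a =>
    induction b using Quotient.inductionOn with | h b =>
    induction c using Quotient.inductionOn with | h c =>
    simp only [PEQ.mk_mul, PartialEquiv.trans_assoc]

/-- The property of being a cofinite monotone partial bijection, on `PEQ`. -/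
def PEQ.IsGood : PEQ → Prop :=
  Quotient.lift IsCMPB fun _ _ h => propext (isCMPB_congr h)

lemma PEQ.IsGood.mul {a b : PEQ} (ha : a.IsGood) (hb : b.IsGood) : (a * b).IsGood := by
  induction a using Quotient.inductionOn with | h a =>
  induction b using Quotient.inductionOn with | h b =>
  exact IsCMPB.trans ha hb

/-- The semigroup `I∞↗(ℕ)` of cofinite monotone partial bijections of `ℕ`
(partial bijections being identified when they have the same source and coincide there). -/
def Imon : Type := {q : PEQ // q.IsGood}

instance : Mul Imon := ⟨fun a b => ⟨a.1 * b.1, a.2.mul b.2⟩⟩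

instance : Semigroup Imon where
  mul_assoc a b c := Subtype.ext (mul_assoc a.1 b.1 c.1)

/-- The underlying symmetrization (inverse partial bijection), on `PEQ`. -/
def PEQ.symm : PEQ → PEQ := Quotient.map PartialEquiv.symm fun _ _ h => PartialEquiv.EqOnSource.symm' h

lemma PEQ.IsGood.symm {a : PEQ} (ha : a.IsGood) : a.symm.IsGood := by
  induction a using Quotient.inductionOn with | h a =>
  exact IsCMPB.symm ha

/-- The inverse in the inverse semigroup `I∞↗(ℕ)`. -/
instance : Inv Imon := ⟨fun a => ⟨a.1.symm, a.2.symm⟩⟩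

/-- The source (domain) of an element of `PEQ`. -/
def PEQ.source : PEQ → Set ℕ :=
  Quotient.lift (fun e => e.source) fun _ _ h => (PartialEquiv.EqOnSource.source_eq h)

/-- The target (range) of an element of `PEQ`. -/
def PEQ.target : PEQ → Set ℕ :=
  Quotient.lift (fun e => e.target) fun _ _ h => (PartialEquiv.EqOnSource.target_eq h)

/-- The source (domain) of a cofinite monotone partial bijection of `ℕ`. -/
def Imon.source (a : Imon) : Set ℕ := a.1.source

/-- The target (range) of a cofinite monotone partial bijection of `ℕ`. -/
def Imon.target (a : Imon) : Set ℕ := a.1.target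

/-- The graph of an element of `PEQ`: pairs `(x, y)` with `x` in the source mapped to `y`. -/
def PEQ.graph : PEQ → Set (ℕ × ℕ) :=
  Quotient.lift (fun e => {p : ℕ × ℕ | p.1 ∈ e.source ∧ e p.1 = p.2}) fun e e' h => by
    ext p
    simp only [mem_setOf_eq]
    constructor
    · rintro ⟨h1, h2⟩
      exact ⟨(PartialEquiv.EqOnSource.source_eq h) ▸ h1, by rw [← (PartialEquiv.EqOnSource.eqOn h) h1]; exact h2⟩
    · rintro ⟨h1, h2⟩
      refine ⟨(PartialEquiv.EqOnSource.source_eq h) ▸ h1, ?_⟩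
      rw [(PartialEquiv.EqOnSource.eqOn h) ((PartialEquiv.EqOnSource.source_eq h) ▸ h1 : p.1 ∈ e.source)]
      exact h2

/-- The graph of a cofinite monotone partial bijection of `ℕ`. -/
def Imon.graph (a : Imon) : Set (ℕ × ℕ) := a.1.graph

/-- The natural partial order on idempotents: `ε ≤ ι` iff `ε * ι = ι * ε = ε`. -/
def idemLE (ε ι : Imon) : Prop := ε * ι = ε ∧ ι * ε = ε

/-- The everywhere-defined partial bijection `n ↦ n + 1`. -/
def alphaPE : PartialEquiv ℕ ℕ where
  toFun n := n + 1
  invFun n := n - 1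
  source := Set.univ
  target := {n : ℕ | 1 ≤ n}
  map_source' n _ := Nat.le_add_left 1 n
  map_target' _ _ := trivial
  left_inv' n _ := by show n + 1 - 1 = n; omega
  right_inv' n hn := by
    simp only [Set.mem_setOf_eq] at hn
    show n - 1 + 1 = n
    omega

lemma alphaPE_good : IsCMPB alphaPE := by
  refine ⟨by simp [alphaPE], ?_, ?_⟩
  · apply (Set.finite_singleton 0).subset
    intro n hn
    simp only [alphaPE, mem_compl_iff, mem_setOf_eq, not_le] at hn
    simp only [mem_singleton_iff]
    omega
  · intro m n _ _ h
    show m + 1 < n + 1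
    omega

/-- The generator `α : n ↦ n + 1` of the bicyclic subsemigroup. -/
def aGen : Imon := ⟨⟦alphaPE⟧, alphaPE_good⟩

/-- The generator `β : n ↦ n - 1` (with source `{n | 1 ≤ n}`) of the bicyclic subsemigroup. -/
def bGen : Imon := aGen⁻¹

/-- The bicyclic subsemigroup `C_ℕ(α, β)` of `I∞↗(ℕ)`, generated by `α` and `β`. -/
def Cbic : Subsemigroup Imon := Subsemigroup.closure {aGen, bGen}


noncomputable section

open Classical in
/-- The partial equiv induced by an order iso between two subsets of ℕ. -/
def peOfIso (A B : Set ℕ) (e : A ≃o B) : PartialEquiv ℕ ℕ where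
  toFun x := if h : x ∈ A then (e ⟨x, h⟩ : ℕ) else 0
  invFun y := if h : y ∈ B then (e.symm ⟨y, h⟩ : ℕ) else 0
  source := A
  target := B
  map_source' x hx := by simp only [dif_pos hx]; exact (e ⟨x, hx⟩).2
  map_target' y hy := by simp only [dif_pos hy]; exact (e.symm ⟨y, hy⟩).2
  left_inv' x hx := by
    simp only [dif_pos hx, dif_pos (e ⟨x, hx⟩).2, Subtype.coe_eta, OrderIso.symm_apply_apply]
  right_inv' y hy := by
    simp only [dif_pos hy, dif_pos (e.symm ⟨y, hy⟩).2, Subtype.coe_eta, OrderIso.apply_symm_apply]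

lemma peOfIso_good {A B : Set ℕ} (hA : Aᶜ.Finite) (hB : Bᶜ.Finite) (e : A ≃o B) :
    IsCMPB (peOfIso A B e) := by
  refine ⟨hA, hB, ?_⟩
  intro m n hm hn hmn
  have hm' : m ∈ A := hm
  have hn' : n ∈ A := hn
  show (peOfIso A B e).toFun m < (peOfIso A B e).toFun n
  simp only [peOfIso]
  rw [dif_pos hm', dif_pos hn']
  exact Subtype.coe_lt_coe.mpr (e.strictMono (Subtype.mk_lt_mk.mpr hmn))

/-- Uniqueness: two CMPBs with equal source and target agree on the source. -/
lemma cmpb_eqOn {e f : PartialEquiv ℕ ℕ} (he : IsCMPB e) (hf : IsCMPB f)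
    (hs : e.source = f.source) (ht : e.target = f.target) :
    ∀ x ∈ e.source, e x = f x := by
  have strictE : StrictMono (fun x : e.source => (⟨e x, e.map_source x.2⟩ : e.target)) := by
    intro x y hxy
    exact Subtype.mk_lt_mk.mpr (he.2.2 x.2 y.2 (Subtype.coe_lt_coe.mpr hxy))
  have surjE : Function.Surjective (fun x : e.source => (⟨e x, e.map_source x.2⟩ : e.target)) :=
    fun y => ⟨⟨e.symm y, e.map_target y.2⟩, Subtype.ext (e.right_inv y.2)⟩
  have strictF : StrictMono (fun x : e.source =>
      (⟨f x, ht ▸ f.map_source (hs ▸ x.2)⟩ : e.target)) := by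
    intro x y hxy
    exact Subtype.mk_lt_mk.mpr (hf.2.2 (hs ▸ x.2) (hs ▸ y.2) (Subtype.coe_lt_coe.mpr hxy))
  have surjF : Function.Surjective (fun x : e.source =>
      (⟨f x, ht ▸ f.map_source (hs ▸ x.2)⟩ : e.target)) := by
    intro y
    refine ⟨⟨f.symm y, hs ▸ f.map_target (ht ▸ y.2)⟩, Subtype.ext (f.right_inv (ht ▸ y.2))⟩
  have := Subsingleton.elim (StrictMono.orderIsoOfSurjective _ strictE surjE)
    (StrictMono.orderIsoOfSurjective _ strictF surjF)
  intro x hx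
  have h2 := congrArg (fun g : e.source ≃o e.target => ((g ⟨x, hx⟩ : e.target) : ℕ)) this
  simpa [StrictMono.coe_orderIsoOfSurjective] using h2

/-- `I∞↗(ℕ)` is a simple semigroup: for all `α β` there are `γ δ`
with `γ * α * δ = β`. -/
theorem Imon_simple (α β : Imon) : ∃ γ δ : Imon, γ * α * δ = β := by
  obtain ⟨α, ha⟩ := α
  obtain ⟨β, hb⟩ := β
  induction α using Quotient.inductionOn with | h a =>
  induction β using Quotient.inductionOn with | h b =>
  have hbS : (b.source : Set ℕ).Infinite := by
    simpa using (hb.1.infinite_compl)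
  have haS : (a.source : Set ℕ).Infinite := by simpa using (ha.1.infinite_compl)
  have haT : (a.target : Set ℕ).Infinite := by simpa using (ha.2.1.infinite_compl)
  have hbT : (b.target : Set ℕ).Infinite := by simpa using (hb.2.1.infinite_compl)
  classical
  have iBS := hbS.to_subtype
  have iAS := haS.to_subtype
  have iAT := haT.to_subtype
  have iBT := hbT.to_subtype
  let eg : b.source ≃o a.source :=
    (Nat.Subtype.orderIsoOfNat b.source).symm.trans (Nat.Subtype.orderIsoOfNat a.source)
  let ed : a.target ≃o b.target :=
    (Nat.Subtype.orderIsoOfNat a.target).symm.trans (Nat.Subtype.orderIsoOfNat b.target)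
  set g := peOfIso b.source a.source eg with hgdef
  set d := peOfIso a.target b.target ed with hddef
  have hg : IsCMPB g := peOfIso_good hb.1 ha.1 eg
  have hd : IsCMPB d := peOfIso_good ha.2.1 hb.2.1 ed
  set c := (g.trans a).trans d with hcdef
  have hc : IsCMPB c := (hg.trans ha).trans hd
  have hgS : g.source = b.source := rfl
  have hgT : g.target = a.source := rfl
  have hdS : d.source = a.target := rfl
  have hdT : d.target = b.target := rfl
  have hcS : c.source = b.source := by
    rw [hcdef, PartialEquiv.trans_source, PartialEquiv.trans_source, hgS, hdS]
    ext x
    simp only [Set.mem_inter_iff, Set.mem_preimage, PartialEquiv.coe_trans, Function.comp_apply]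
    constructor
    · rintro ⟨⟨h1, _⟩, _⟩; exact h1
    · intro hx
      have h1 : g x ∈ a.source := hgT ▸ g.map_source hx
      exact ⟨⟨hx, h1⟩, hdS ▸ a.map_source h1⟩
  have hcT : c.target = b.target := by
    rw [hcdef, PartialEquiv.trans_target, PartialEquiv.trans_target, hgT, hdT]
    ext y
    simp only [Set.mem_inter_iff, Set.mem_preimage, PartialEquiv.coe_trans_symm,
      Function.comp_apply]
    constructor
    · rintro ⟨h1, _⟩; exact h1
    · intro hy
      have h1 : d.symm y ∈ a.target := hdS ▸ d.map_target (hdT ▸ hy)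
      exact ⟨hy, h1, a.map_target h1⟩
  have heq : c ≈ b := by
    refine ⟨hcS, ?_⟩
    intro x hx
    exact cmpb_eqOn hc hb hcS hcT x hx
  refine ⟨⟨⟦g⟧, hg⟩, ⟨⟦d⟧, hd⟩, ?_⟩
  apply Subtype.ext
  show (⟦g⟧ * ⟦a⟧ * ⟦d⟧ : PEQ) = ⟦b⟧
  rw [PEQ.mk_mul, PEQ.mk_mul]
  exact Quotient.sound heq
end
end

section
/- For elements α, β of I∞↗(ℕ): there exist χ₁, χ₂ ∈ I∞↗(ℕ) with α * χ₁ = β and β * χ₂ = α if and only if the source (domain) of α equals the source of β; dually, there exist χ₁, χ₂ ∈ I∞↗(ℕ) with χ₁ * α = β and χ₂ * β = α if and only if the target (range) of α equals the target of β. (That is, Green's relations R and L on I∞↗(ℕ) are equality of domains and equality of ranges, respectively.) -/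
open Set

lemma key_trans {e f : PartialEquiv ℕ ℕ} (h : e.source = f.source) :
    e.trans (e.symm.trans f) ≈ f := by
  have hsrc : (e.trans (e.symm.trans f)).source = f.source := by
    ext x
    simp only [PartialEquiv.trans_source, PartialEquiv.symm_source,
      mem_inter_iff, mem_preimage, PartialEquiv.symm_symm]
    constructor
    · rintro ⟨hx, -, -⟩; rw [← h]; exact hx
    · intro hx
      have hx' : x ∈ e.source := h ▸ hx
      refine ⟨hx', e.map_source hx', ?_⟩
      show e.symm (e x) ∈ f.source
      rw [e.left_inv hx']; exact hx
  refine ⟨hsrc, fun x hx => ?_⟩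
  have hx' : x ∈ e.source := h ▸ (hsrc ▸ hx)
  show f (e.symm (e x)) = f x
  rw [e.left_inv hx']

lemma PEQ.mul_source_subset (a b : PEQ) : (a * b).source ⊆ a.source := by
  induction a using Quotient.inductionOn with | h a =>
  induction b using Quotient.inductionOn with | h b =>
  show (a.trans b).source ⊆ a.source
  rw [PartialEquiv.trans_source]; exact inter_subset_left

lemma PEQ.mul_symm_mul {a b : PEQ} (h : a.source = b.source) : a * (a.symm * b) = b := by
  induction a using Quotient.inductionOn with | h a =>
  induction b using Quotient.inductionOn with | h b =>
  exact Quotient.sound (key_trans h)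

lemma Imon.mul_inv_rev (a b : Imon) : (a * b)⁻¹ = b⁻¹ * a⁻¹ := by
  apply Subtype.ext
  obtain ⟨a, ha⟩ := a; obtain ⟨b, hb⟩ := b
  induction a using Quotient.inductionOn with | h a =>
  induction b using Quotient.inductionOn with | h b =>
  show (⟦(a.trans b).symm⟧ : PEQ) = ⟦b.symm.trans a.symm⟧
  rw [PartialEquiv.trans_symm_eq_symm_trans_symm]

lemma Imon.inv_inv' (a : Imon) : a⁻¹⁻¹ = a := by
  apply Subtype.ext
  obtain ⟨a, ha⟩ := a
  induction a using Quotient.inductionOn with | h a =>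
  show (⟦a.symm.symm⟧ : PEQ) = ⟦a⟧
  rw [PartialEquiv.symm_symm]

lemma Imon.inv_source (a : Imon) : (a⁻¹).source = a.target := by
  obtain ⟨a, ha⟩ := a
  induction a using Quotient.inductionOn with | h a =>
  rfl

lemma Imon.green_R (α β : Imon) :
    ((∃ χ₁ : Imon, α * χ₁ = β) ∧ (∃ χ₂ : Imon, β * χ₂ = α)) ↔ α.source = β.source := by
  constructor
  · rintro ⟨⟨χ₁, h₁⟩, ⟨χ₂, h₂⟩⟩
    apply subset_antisymm
    · rw [← h₂]; exact PEQ.mul_source_subset β.1 χ₂.1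
    · rw [← h₁]; exact PEQ.mul_source_subset α.1 χ₁.1
  · intro h
    constructor
    · exact ⟨α⁻¹ * β, Subtype.ext (PEQ.mul_symm_mul h)⟩
    · exact ⟨β⁻¹ * α, Subtype.ext (PEQ.mul_symm_mul h.symm)⟩

/-- Green's relations `R` and `L` on `I∞↗(ℕ)` are equality of sources
(domains) and equality of targets (ranges), respectively. -/
theorem Imon_green_R_and_L (α β : Imon) :
    (((∃ χ₁ : Imon, α * χ₁ = β) ∧ (∃ χ₂ : Imon, β * χ₂ = α)) ↔ α.source = β.source) ∧
    (((∃ χ₁ : Imon, χ₁ * α = β) ∧ (∃ χ₂ : Imon, χ₂ * β = α)) ↔ α.target = β.target) := by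
  refine ⟨Imon.green_R α β, ?_⟩
  have hiff : ∀ γ δ : Imon, (∃ χ : Imon, χ * γ = δ) ↔ (∃ χ : Imon, γ⁻¹ * χ = δ⁻¹) := by
    intro γ δ
    constructor
    · rintro ⟨χ, rfl⟩
      exact ⟨χ⁻¹, (Imon.mul_inv_rev χ γ).symm⟩
    · rintro ⟨χ, hχ⟩
      refine ⟨χ⁻¹, ?_⟩
      have := congrArg (·⁻¹) hχ
      simp only [Imon.mul_inv_rev, Imon.inv_inv'] at this
      exact this
  rw [hiff α β, hiff β α, ← Imon.inv_source α, ← Imon.inv_source β]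
  exact Imon.green_R α⁻¹ β⁻¹
end

section
/- For every two idempotents ε and ι of the semigroup I∞↗(ℕ) there exists an element α of I∞↗(ℕ) such that α * α⁻¹ = ε and α⁻¹ * α = ι. Equivalently, for any two cofinite subsets A and B of ℕ there is an element of I∞↗(ℕ) with source A and target B. -/
open Set

open scoped Classical in
/-- Monotone partial bijection between two infinite subsets of ℕ. -/
noncomputable def monoPE (A B : Set ℕ) (hA : A.Infinite) (hB : B.Infinite) :
    PartialEquiv ℕ ℕ where
  toFun n := Nat.nth (· ∈ B) (Nat.count (· ∈ A) n)
  invFun n := Nat.nth (· ∈ A) (Nat.count (· ∈ B) n)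
  source := A
  target := B
  map_source' n hn := Nat.nth_mem_of_infinite (by simpa using hB) _
  map_target' n hn := Nat.nth_mem_of_infinite (by simpa using hA) _
  left_inv' n hn := by
    show Nat.nth (· ∈ A) (Nat.count (· ∈ B) (Nat.nth (· ∈ B) (Nat.count (· ∈ A) n))) = n
    rw [Nat.count_nth_of_infinite (by simpa using hB), Nat.nth_count hn]
  right_inv' n hn := by
    show Nat.nth (· ∈ B) (Nat.count (· ∈ A) (Nat.nth (· ∈ A) (Nat.count (· ∈ B) n))) = n
    rw [Nat.count_nth_of_infinite (by simpa using hA), Nat.nth_count hn]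

open scoped Classical in
lemma monoPE_good (A B : Set ℕ) (hA : Aᶜ.Finite) (hB : Bᶜ.Finite) :
    IsCMPB (monoPE A B (compl_compl A ▸ hA.infinite_compl)
      (compl_compl B ▸ hB.infinite_compl)) := by
  refine ⟨hA, hB, ?_⟩
  intro m n hm hn hmn
  show Nat.nth _ _ < Nat.nth _ _
  exact (Nat.nth_lt_nth (by simpa using (compl_compl B ▸ hB.infinite_compl : B.Infinite))).2
    (Nat.count_strict_mono hm hmn)

lemma idem_eq_ofSet (e : PartialEquiv ℕ ℕ) (h : e.trans e ≈ e) :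
    e ≈ PartialEquiv.ofSet e.source := by
  have hsrc := PartialEquiv.EqOnSource.source_eq h
  have heq := PartialEquiv.EqOnSource.eqOn h
  refine ⟨by simp, fun x hx => ?_⟩
  have hx2 : x ∈ (e.trans e).source := hsrc.symm ▸ hx
  have hx3 : x ∈ e ⁻¹' e.source := by
    have := hx2
    rw [PartialEquiv.trans_source] at this
    exact this.2
  have h1 : e (e x) = e x := heq hx2
  have : e x = x := e.injOn hx3 hx (by simpa using h1)
  simpa using this

/-- for any two idempotents `ε`, `ι` of `I∞↗(ℕ)` there is an element `α`
with `α * α⁻¹ = ε` and `α⁻¹ * α = ι`. -/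

theorem Imon_idempotents_D_related (ε ι : Imon) (hε : ε * ε = ε) (hι : ι * ι = ι) :
    ∃ α : Imon, α * α⁻¹ = ε ∧ α⁻¹ * α = ι := by
  obtain ⟨e, he⟩ := Quotient.exists_rep ε.1
  obtain ⟨f, hf⟩ := Quotient.exists_rep ι.1
  have hegood : IsCMPB e := by rw [show IsCMPB e ↔ PEQ.IsGood ⟦e⟧ from Iff.rfl, he]; exact ε.2
  have hfgood : IsCMPB f := by rw [show IsCMPB f ↔ PEQ.IsGood ⟦f⟧ from Iff.rfl, hf]; exact ι.2
  have heidem : e.trans e ≈ e := by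
    apply Quotient.exact
    show (⟦e⟧ * ⟦e⟧ : PEQ) = ⟦e⟧
    rw [he]
    exact congrArg Subtype.val hε
  have hfidem : f.trans f ≈ f := by
    apply Quotient.exact
    show (⟦f⟧ * ⟦f⟧ : PEQ) = ⟦f⟧
    rw [hf]
    exact congrArg Subtype.val hι
  set A := e.source
  set B := f.source
  have hA : Aᶜ.Finite := hegood.1
  have hB : Bᶜ.Finite := hfgood.1
  have g := monoPE A B (compl_compl A ▸ hA.infinite_compl) (compl_compl B ▸ hB.infinite_compl)
  refine ⟨⟨⟦monoPE A B (compl_compl A ▸ hA.infinite_compl) (compl_compl B ▸ hB.infinite_compl)⟧,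
    monoPE_good A B hA hB⟩, ?_, ?_⟩
  · apply Subtype.ext
    show (⟦_⟧ * PEQ.symm ⟦_⟧ : PEQ) = ε.1
    rw [show PEQ.symm ⟦monoPE A B (compl_compl A ▸ hA.infinite_compl)
        (compl_compl B ▸ hB.infinite_compl)⟧ =
      ⟦(monoPE A B (compl_compl A ▸ hA.infinite_compl)
        (compl_compl B ▸ hB.infinite_compl)).symm⟧ from rfl, PEQ.mk_mul, ← he]
    apply Quotient.sound
    refine Setoid.trans (PartialEquiv.self_trans_symm _) ?_
    exact Setoid.symm (idem_eq_ofSet e heidem)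
  · apply Subtype.ext
    show (PEQ.symm ⟦_⟧ * ⟦_⟧ : PEQ) = ι.1
    rw [show PEQ.symm ⟦monoPE A B (compl_compl A ▸ hA.infinite_compl)
        (compl_compl B ▸ hB.infinite_compl)⟧ =
      ⟦(monoPE A B (compl_compl A ▸ hA.infinite_compl)
        (compl_compl B ▸ hB.infinite_compl)).symm⟧ from rfl, PEQ.mk_mul, ← hf]
    apply Quotient.sound
    refine Setoid.trans (PartialEquiv.symm_trans_self _) ?_
    exact Setoid.symm (idem_eq_ofSet f hfidem)
end

section
/- Every maximal chain in the partially ordered set of idempotents of I∞↗(ℕ) (ordered by the natural partial order on idempotents) is an ω-chain, i.e., it is order-isomorphic to the set {0, −1, −2, −3, …} of nonpositive integers with the usual order (equivalently, to the order dual of ℕ). -/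
open Set

section AuxOmega

lemma isCMPB_ofSet {A : Set ℕ} (hA : Aᶜ.Finite) : IsCMPB (PartialEquiv.ofSet A) :=
  ⟨hA, hA, fun _ _ _ _ h => h⟩

/-- The idempotent of `Imon` given by the identity on a cofinite set. -/
def epsOf (A : Set ℕ) (hA : Aᶜ.Finite) : Imon := ⟨⟦PartialEquiv.ofSet A⟧, isCMPB_ofSet hA⟩

lemma epsOf_source (A : Set ℕ) (hA : Aᶜ.Finite) : (epsOf A hA).source = A := rfl

lemma epsOf_congr {A B : Set ℕ} {hA : Aᶜ.Finite} {hB : Bᶜ.Finite} (h : A = B) :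
    epsOf A hA = epsOf B hB := by subst h; rfl

lemma epsOf_inj {A B : Set ℕ} {hA : Aᶜ.Finite} {hB : Bᶜ.Finite}
    (h : epsOf A hA = epsOf B hB) : A = B := by
  have := congrArg Imon.source h
  simpa [epsOf_source] using this

lemma Imon.source_compl_finite (a : Imon) : a.sourceᶜ.Finite := by
  obtain ⟨q, hq⟩ := a
  induction q using Quotient.inductionOn with | h e =>
  exact hq.1

lemma idem_eq_epsOf {ε : Imon} (h : ε * ε = ε) :
    ε = epsOf ε.source ε.source_compl_finite := by
  obtain ⟨q, hq⟩ := ε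
  induction q using Quotient.inductionOn with | h e =>
  apply Subtype.ext
  apply Quotient.sound
  have h' : e.trans e ≈ e := Quotient.exact (congrArg Subtype.val h)
  refine ⟨rfl, fun x hx => ?_⟩
  have hmem : x ∈ (e.trans e).source := h'.source_eq.symm ▸ hx
  have hx2 : e x ∈ e.source := by
    rw [PartialEquiv.trans_source] at hmem
    exact hmem.2
  exact e.injOn hx2 hx (PartialEquiv.EqOnSource.eqOn h' hmem)

lemma epsOf_mul (A B : Set ℕ) (hA : Aᶜ.Finite) (hB : Bᶜ.Finite) (hAB : (A ∩ B)ᶜ.Finite) :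
    epsOf A hA * epsOf B hB = epsOf (A ∩ B) hAB := by
  apply Subtype.ext
  apply Quotient.sound
  refine ⟨?_, fun x _ => rfl⟩
  show A ∩ (id : ℕ → ℕ) ⁻¹' B = A ∩ B
  rfl

lemma idemLE_epsOf {A B : Set ℕ} (hA : Aᶜ.Finite) (hB : Bᶜ.Finite) :
    idemLE (epsOf A hA) (epsOf B hB) ↔ A ⊆ B := by
  have hAB : (A ∩ B)ᶜ.Finite := by rw [Set.compl_inter]; exact hA.union hB
  have hBA : (B ∩ A)ᶜ.Finite := by rw [Set.compl_inter]; exact hB.union hA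
  constructor
  · rintro ⟨h1, _⟩
    rw [epsOf_mul A B hA hB hAB] at h1
    have := epsOf_inj h1
    rw [← this]
    exact Set.inter_subset_right
  · intro h
    refine ⟨?_, ?_⟩
    · rw [epsOf_mul A B hA hB hAB]
      exact epsOf_congr (Set.inter_eq_left.mpr h)
    · rw [epsOf_mul B A hB hA hBA]
      exact epsOf_congr (Set.inter_eq_right.mpr h)

end AuxOmega

/-- every maximal chain in the poset of idempotents of `I∞↗(ℕ)` is an
`ω`-chain, i.e. order-isomorphic to `{0, -1, -2, …}`: it is enumerated by a strictly
decreasing sequence indexed by `ℕ`. -/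
theorem Imon_maximal_chain_omega (C : Set Imon)
    (hCidem : C ⊆ {ε : Imon | ε * ε = ε})
    (hchain : ∀ ε ∈ C, ∀ ι ∈ C, idemLE ε ι ∨ idemLE ι ε)
    (hmax : ∀ D : Set Imon, D ⊆ {ε : Imon | ε * ε = ε} →
      (∀ ε ∈ D, ∀ ι ∈ D, idemLE ε ι ∨ idemLE ι ε) → C ⊆ D → C = D) :
    ∃ g : ℕ → Imon, Set.range g = C ∧
      ∀ m n : ℕ, m < n → idemLE (g n) (g m) ∧ g n ≠ g m := by
    classical
  set nc : Imon → ℕ := fun ε => ε.sourceᶜ.ncard with hnc_def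
  -- chain comparisons in terms of sources
  have hsub : ∀ ε ∈ C, ∀ ι ∈ C, ε.source ⊆ ι.source ∨ ι.source ⊆ ε.source := by
    intro ε hε ι hι
    rcases hchain ε hε ι hι with h | h
    · left
      rw [idem_eq_epsOf (hCidem hε), idem_eq_epsOf (hCidem hι)] at h
      exact (idemLE_epsOf _ _).mp h
    · right
      rw [idem_eq_epsOf (hCidem hε), idem_eq_epsOf (hCidem hι)] at h
      exact (idemLE_epsOf _ _).mp h
  have hle : ∀ ε ∈ C, ∀ ι ∈ C, ε.source ⊆ ι.source → idemLE ε ι := by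
    intro ε hε ι hι h
    rw [idem_eq_epsOf (hCidem hε), idem_eq_epsOf (hCidem hι)]
    exact (idemLE_epsOf _ _).mpr h
  have hinjsrc : ∀ ε ∈ C, ∀ ι ∈ C, ε.source = ι.source → ε = ι := by
    intro ε hε ι hι h
    rw [idem_eq_epsOf (hCidem hε), idem_eq_epsOf (hCidem hι)]
    exact epsOf_congr h
  have hinj : ∀ ε ∈ C, ∀ ι ∈ C, nc ε = nc ι → ε = ι := by
    intro ε hε ι hι h
    rcases hsub ε hε ι hι with hs | hs
    · have hcc : ι.sourceᶜ = ε.sourceᶜ :=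
        Set.eq_of_subset_of_ncard_le (Set.compl_subset_compl.mpr hs) h.le
          ε.source_compl_finite
      exact hinjsrc ε hε ι hι (compl_injective hcc.symm)
    · have hcc : ε.sourceᶜ = ι.sourceᶜ :=
        Set.eq_of_subset_of_ncard_le (Set.compl_subset_compl.mpr hs) h.ge
          ι.source_compl_finite
      exact hinjsrc ε hε ι hι (compl_injective hcc)
  -- every natural number is realized as a complement cardinality
  have hsurj : ∀ k : ℕ, ∃ ε ∈ C, nc ε = k := by
    intro k
    induction k using Nat.strong_induction_on with
    | _ k IH =>
    by_contra hkk
    push_neg at hkk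
    -- a generic way to get a contradiction: a new comparable idempotent
    have key : ∀ (B : Set ℕ) (hB : Bᶜ.Finite), Bᶜ.ncard = k →
        (∀ ι ∈ C, B ⊆ ι.source ∨ ι.source ⊆ B) → False := by
      intro B hB hBk hcomp
      have hBB : (B ∩ B)ᶜ.Finite := by rw [Set.inter_self]; exact hB
      have hidemB : epsOf B hB * epsOf B hB = epsOf B hB := by
        rw [epsOf_mul B B hB hB hBB]
        exact epsOf_congr (Set.inter_self B)
      have hD : C = insert (epsOf B hB) C := by
        apply hmax
        · intro ε hε
          rcases hε with rfl | hε
          · exact hidemB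
          · exact hCidem hε
        · intro ε hε ι hι
          rcases hε with rfl | hε <;> rcases hι with rfl | hι
          · left; exact ⟨hidemB, hidemB⟩
          · rcases hcomp ι hι with h | h
            · left
              rw [idem_eq_epsOf (hCidem hι)]
              exact (idemLE_epsOf _ _).mpr h
            · right
              rw [idem_eq_epsOf (hCidem hι)]
              exact (idemLE_epsOf _ _).mpr h
          · rcases hcomp ε hε with h | h
            · right
              rw [idem_eq_epsOf (hCidem hε)]
              exact (idemLE_epsOf _ _).mpr h
            · left
              rw [idem_eq_epsOf (hCidem hε)]
              exact (idemLE_epsOf _ _).mpr h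
          · exact hchain ε hε ι hι
        · exact Set.subset_insert _ _
      have hmem : epsOf B hB ∈ C := hD ▸ Set.mem_insert _ _
      exact hkk (epsOf B hB) hmem hBk
    rcases Nat.eq_zero_or_pos k with rfl | hkpos
    · apply key Set.univ (by simp) (by simp)
      intro ι _
      right
      exact Set.subset_univ _
    · obtain ⟨j, rfl⟩ : ∃ j, k = j + 1 := ⟨k - 1, by omega⟩
      obtain ⟨εj, hεjC, hεjnc⟩ := IH j (by omega)
      set A := εj.source with hAdef
      have hA : Aᶜ.Finite := εj.source_compl_finite
      -- the family of elements strictly below A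
      have hSprop : ∀ ι ∈ C, ¬ A ⊆ ι.source → ι.source ⊆ A ∧ j + 2 ≤ nc ι := by
        intro ι hι hni
        have hs : ι.source ⊆ A := by
          rcases hsub ι hι εj hεjC with h | h
          · exact h
          · exact absurd h hni
        have hne : ι.source ≠ A := fun h => hni (h ▸ subset_rfl)
        have hss : Aᶜ ⊂ ι.sourceᶜ := by
          refine ⟨Set.compl_subset_compl.mpr hs, fun h => hne ?_⟩
          have h5 : Aᶜ = ι.sourceᶜ := Set.Subset.antisymm (Set.compl_subset_compl.mpr hs) h
          exact (compl_injective h5).symm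
        have hAcard : Aᶜ.ncard = j := hεjnc
        have hlt : j < ι.sourceᶜ.ncard := by
          have := Set.ncard_lt_ncard hss ι.source_compl_finite
          omega
        have hnek : ι.sourceᶜ.ncard ≠ j + 1 := hkk ι hι
        refine ⟨hs, ?_⟩
        show j + 2 ≤ ι.sourceᶜ.ncard
        omega
      -- find a point of A avoided by all elements strictly below A
      have hex : ∃ a ∈ A, ∀ ι ∈ C, ¬ A ⊆ ι.source → a ∉ ι.source := by
        by_cases hS : ∃ ι ∈ C, ¬ A ⊆ ι.source
        · obtain ⟨ι₁, hι₁C, hι₁⟩ := hS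
          have hTne : (nc '' {ι | ι ∈ C ∧ ¬ A ⊆ ι.source}).Nonempty :=
            ⟨nc ι₁, ⟨ι₁, ⟨hι₁C, hι₁⟩, rfl⟩⟩
          obtain ⟨ι₀, ⟨hι₀C, hι₀n⟩, hι₀m⟩ := Nat.sInf_mem hTne
          have hmin : ∀ ι ∈ C, ¬ A ⊆ ι.source → nc ι₀ ≤ nc ι := by
            intro ι hι hni
            rw [hι₀m]
            exact Nat.sInf_le ⟨ι, ⟨hι, hni⟩, rfl⟩
          have hallsub : ∀ ι ∈ C, ¬ A ⊆ ι.source → ι.source ⊆ ι₀.source := by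
            intro ι hι hni
            rcases hsub ι hι ι₀ hι₀C with h | h
            · exact h
            · have h1 : ι.sourceᶜ ⊆ ι₀.sourceᶜ := Set.compl_subset_compl.mpr h
              have h2 : ι.sourceᶜ = ι₀.sourceᶜ :=
                Set.eq_of_subset_of_ncard_le h1 (hmin ι hι hni) ι₀.source_compl_finite
              exact (compl_injective h2).le
          -- pick a ∈ A outside ι₀.source
          have hbig : j + 2 ≤ nc ι₀ := (hSprop ι₀ hι₀C hι₀n).2
          have hbig2 : j + 2 ≤ ι₀.sourceᶜ.ncard := hbig
          have hnsub : ¬ ι₀.sourceᶜ ⊆ Aᶜ := by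
            intro h
            have h6 := Set.ncard_le_ncard h hA
            have hAcard : Aᶜ.ncard = j := hεjnc
            omega
          obtain ⟨a, ha1, ha2⟩ := Set.not_subset.mp hnsub
          refine ⟨a, by simpa using ha2, ?_⟩
          intro ι hι hni ha
          exact ha1 (hallsub ι hι hni ha)
        · push_neg at hS
          have : A.Nonempty := by
            have : Aᶜᶜ.Infinite := hA.infinite_compl
            rw [compl_compl] at this
            exact this.nonempty
          obtain ⟨a, ha⟩ := this
          exact ⟨a, ha, fun ι hι hni => absurd (hS ι hι) hni⟩
      obtain ⟨a, haA, havoid⟩ := hex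
      set B := A \ {a} with hBdef
      have hBc : Bᶜ = insert a Aᶜ := by
        rw [hBdef]
        ext x
        simp [Set.mem_diff]
        tauto
      have hB : Bᶜ.Finite := by rw [hBc]; exact hA.insert a
      have hBk : Bᶜ.ncard = j + 1 := by
        rw [hBc, Set.ncard_insert_of_notMem (by simpa using haA) hA]
        have : Aᶜ.ncard = j := hεjnc
        omega
      apply key B hB hBk
      intro ι hι
      by_cases hAι : A ⊆ ι.source
      · left
        exact (Set.diff_subset).trans hAι
      · right
        have h1 : ι.source ⊆ A := (hSprop ι hι hAι).1
        have h2 : a ∉ ι.source := havoid ι hι hAι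
        intro x hx
        exact ⟨h1 hx, fun hxa => h2 (by rwa [← Set.mem_singleton_iff.mp hxa])⟩
  choose g hgC hgnc using hsurj
  refine ⟨g, ?_, ?_⟩
  · ext ε
    constructor
    · rintro ⟨n, rfl⟩
      exact hgC n
    · intro hε
      exact ⟨nc ε, hinj _ (hgC (nc ε)) _ hε (hgnc (nc ε))⟩
  · intro m n hmn
    have hne : g n ≠ g m := by
      intro h
      have := congrArg nc h
      rw [hgnc, hgnc] at this
      omega
    refine ⟨?_, hne⟩
    rcases hsub _ (hgC n) _ (hgC m) with hs | hs
    · exact hle _ (hgC n) _ (hgC m) hs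
    · exfalso
      have h1 : (g n).sourceᶜ ⊆ (g m).sourceᶜ := Set.compl_subset_compl.mpr hs
      have h2 : nc (g n) ≤ nc (g m) := Set.ncard_le_ncard h1 (g m).source_compl_finite
      rw [hgnc, hgnc] at h2
      omega
end

section
/- For every idempotent ε of I∞↗(ℕ) there exist an idempotent ε₀ of I∞↗(ℕ) and elements γ, δ of I∞↗(ℕ) such that: ε₀ ≤ ε; ε₀ is not an idempotent of the subsemigroup C = C_ℕ(α,β); γ * δ = ε₀ and δ * γ ≠ ε₀; ε₀ * γ = γ = γ * ε₀ and ε₀ * δ = δ = δ * ε₀ (so ε₀ is a two-sided identity of the subsemigroup generated by γ and δ, which is therefore an isomorphic copy of the bicyclic semigroup); and the subsemigroup of I∞↗(ℕ) generated by {γ, δ} is disjoint from C. -/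
open Set

/-! ### Auxiliary material for the main theorem -/

/-- Constructor for elements of `Imon`. -/
def ImonMk (e : PartialEquiv ℕ ℕ) (he : IsCMPB e) : Imon := ⟨⟦e⟧, he⟩

lemma ImonMk_mul (e f : PartialEquiv ℕ ℕ) (he : IsCMPB e) (hf : IsCMPB f) :
    ImonMk e he * ImonMk f hf = ImonMk (e.trans f) (he.trans hf) := rfl

lemma ImonMk_eq {e f : PartialEquiv ℕ ℕ} {he : IsCMPB e} {hf : IsCMPB f} (h : e ≈ f) :
    ImonMk e he = ImonMk f hf := Subtype.ext (Quotient.sound h)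

lemma Imon.exists_rep (x : Imon) : ∃ (e : PartialEquiv ℕ ℕ) (he : IsCMPB e), x = ImonMk e he := by
  obtain ⟨q, hq⟩ := x
  induction q using Quotient.inductionOn with
  | h e => exact ⟨e, hq, rfl⟩

lemma ImonMk_source (e : PartialEquiv ℕ ℕ) (he : IsCMPB e) :
    (ImonMk e he).source = e.source := rfl

lemma ImonMk_graph_mem (e : PartialEquiv ℕ ℕ) (he : IsCMPB e) (a b : ℕ) :
    (a, b) ∈ (ImonMk e he).graph ↔ a ∈ e.source ∧ e a = b := Iff.rfl

/-- A cofinite set of naturals contains a tail. -/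
lemma exists_tail_subset {s : Set ℕ} (hs : sᶜ.Finite) : ∃ N, ∀ x, N ≤ x → x ∈ s := by
  obtain ⟨B, hB⟩ := hs.bddAbove
  refine ⟨B + 1, fun x hx => ?_⟩
  by_contra hxs
  have := hB hxs
  omega

/-- Products preserve the property of having a source of the form `[m, ∞)`. -/
lemma tail_mul (x y : Imon) (hx : ∃ m, x.source = Set.Ici m) (hy : ∃ m, y.source = Set.Ici m) :
    ∃ m, (x * y).source = Set.Ici m := by
  obtain ⟨e, he, rfl⟩ := x.exists_rep
  obtain ⟨f, hf, rfl⟩ := y.exists_rep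
  obtain ⟨m1, hm1⟩ := hx
  obtain ⟨m2, hm2⟩ := hy
  rw [ImonMk_source] at hm1 hm2
  rw [ImonMk_mul, ImonMk_source, PartialEquiv.trans_source, hm1, hm2]
  -- the set {x : m1 ≤ x ∧ m2 ≤ e x} is a nonempty upward closed set
  have hne : ∃ a, m1 ≤ a ∧ m2 ≤ e a := by
    obtain ⟨B, hB⟩ := exists_tail_subset he.2.1
    have ht : max m2 B ∈ e.target := hB _ (le_max_right _ _)
    refine ⟨e.symm (max m2 B), ?_, ?_⟩
    · have := e.map_target ht
      rw [hm1] at this; exact this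
    · rw [e.right_inv ht]; exact le_max_left _ _
  have hspec := Nat.find_spec hne
  refine ⟨Nat.find hne, ?_⟩
  ext z
  simp only [Set.mem_inter_iff, Set.mem_Ici, Set.mem_preimage]
  constructor
  · rintro ⟨h1, h2⟩
    exact Nat.find_le ⟨h1, h2⟩
  · intro hz
    refine ⟨le_trans hspec.1 hz, ?_⟩
    rcases eq_or_lt_of_le hz with h | h
    · rw [← h]; exact hspec.2
    · have hmono := he.2.2 (m := Nat.find hne) (n := z)
        (by rw [hm1]; exact Set.mem_Ici.mpr hspec.1)
        (by rw [hm1]; exact Set.mem_Ici.mpr (le_trans hspec.1 hz)) h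
      omega

/-- Every element of the bicyclic semigroup `C` has source `[m, ∞)` for some `m`. -/
lemma Cbic_source_tail (w : Imon) (hw : w ∈ Cbic) : ∃ m, w.source = Set.Ici m := by
  induction hw using Subsemigroup.closure_induction with
  | mem x hx =>
    rcases hx with hx | hx
    · refine ⟨0, ?_⟩
      rw [hx]
      show alphaPE.source = Set.Ici 0
      ext z; simp [alphaPE]
    · refine ⟨1, ?_⟩
      rw [show x = bGen from hx]
      show alphaPE.target = Set.Ici 1
      ext z; simp [alphaPE]
  | mul x y hx hy ihx ihy => exact tail_mul x y ihx ihy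

/-- The shift-with-a-fixed-point partial bijection used to build the bicyclic copy. -/
def gamPE (N : ℕ) : PartialEquiv ℕ ℕ where
  toFun x := if x = N then N else x + 1
  invFun y := if y = N then N else y - 1
  source := {N} ∪ Set.Ici (N + 2)
  target := {N} ∪ Set.Ici (N + 3)
  map_source' x hx := by
    rcases hx with hx | hx
    · left; simp only [Set.mem_singleton_iff] at hx ⊢; simp [hx]
    · simp only [Set.mem_Ici] at hx
      right; simp only [Set.mem_Ici]
      rw [if_neg (by omega)]; omega
  map_target' y hy := by
    rcases hy with hy | hy
    · left; simp only [Set.mem_singleton_iff] at hy ⊢; simp [hy]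
    · simp only [Set.mem_Ici] at hy
      right; simp only [Set.mem_Ici]
      rw [if_neg (by omega)]; omega
  left_inv' x hx := by
    rcases hx with hx | hx
    · simp only [Set.mem_singleton_iff] at hx; simp [hx]
    · simp only [Set.mem_Ici] at hx
      have h1 : ¬(x = N) := by omega
      have h2 : ¬(x + 1 = N) := by omega
      simp only [h1, if_false, h2]; omega
  right_inv' y hy := by
    rcases hy with hy | hy
    · simp only [Set.mem_singleton_iff] at hy; simp [hy]
    · simp only [Set.mem_Ici] at hy
      have h1 : ¬(y = N) := by omega
      have h2 : ¬(y - 1 = N) := by omega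
      simp only [h1, if_false, h2]; omega

lemma gamPE_good (N : ℕ) : IsCMPB (gamPE N) := by
  refine ⟨?_, ?_, ?_⟩
  · apply (Set.finite_Iio (N + 2)).subset
    intro z hz
    simp only [gamPE, Set.mem_compl_iff, Set.mem_union, Set.mem_singleton_iff, Set.mem_Ici,
      not_or, not_le] at hz
    simpa using hz.2
  · apply (Set.finite_Iio (N + 3)).subset
    intro z hz
    simp only [gamPE, Set.mem_compl_iff, Set.mem_union, Set.mem_singleton_iff, Set.mem_Ici,
      not_or, not_le] at hz
    simpa using hz.2
  · intro m n hm hn hmn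
    simp only [gamPE, Set.mem_union, Set.mem_singleton_iff, Set.mem_Ici] at hm hn
    show (if m = N then N else m + 1) < (if n = N then N else n + 1)
    split_ifs <;> omega

lemma ofSet_good {s : Set ℕ} (hs : sᶜ.Finite) : IsCMPB (PartialEquiv.ofSet s) :=
  ⟨hs, hs, fun _ _ _ _ h => h⟩

lemma Imon.graph_mul {x y : Imon} {a b c : ℕ} (h1 : (a, b) ∈ x.graph) (h2 : (b, c) ∈ y.graph) :
    (a, c) ∈ (x * y).graph := by
  obtain ⟨e, he, rfl⟩ := x.exists_rep
  obtain ⟨f, hf, rfl⟩ := y.exists_rep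
  rw [ImonMk_graph_mem] at h1 h2
  rw [ImonMk_mul, ImonMk_graph_mem]
  refine ⟨?_, ?_⟩
  · rw [PartialEquiv.trans_source]
    refine ⟨h1.1, ?_⟩
    simp only [Set.mem_preimage]
    rw [h1.2]; exact h2.1
  · rw [PartialEquiv.trans_apply, h1.2, h2.2]

lemma Imon.source_mul_left (x y : Imon) : (x * y).source ⊆ x.source := by
  obtain ⟨e, he, rfl⟩ := x.exists_rep
  obtain ⟨f, hf, rfl⟩ := y.exists_rep
  rw [ImonMk_mul, ImonMk_source, ImonMk_source, PartialEquiv.trans_source]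
  exact Set.inter_subset_left

lemma Imon.graph_fst {x : Imon} {a b : ℕ} (h : (a, b) ∈ x.graph) : a ∈ x.source := by
  obtain ⟨e, he, rfl⟩ := x.exists_rep
  exact h.1

lemma eqOnSource_of (e f : PartialEquiv ℕ ℕ) (h1 : e.source = f.source)
    (h2 : ∀ x ∈ e.source, e x = f x) : e ≈ f := ⟨h1, h2⟩

lemma ofSet_trans_eq (s : Set ℕ) (f : PartialEquiv ℕ ℕ) (h : f.source ⊆ s) :
    (PartialEquiv.ofSet s).trans f ≈ f := by
  refine ⟨?_, fun x _ => rfl⟩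
  rw [PartialEquiv.trans_source, PartialEquiv.ofSet_source, PartialEquiv.ofSet_coe,
    Set.preimage_id]
  exact Set.inter_eq_right.mpr h

lemma trans_ofSet_eq (s : Set ℕ) (f : PartialEquiv ℕ ℕ) (h : f.target ⊆ s) :
    f.trans (PartialEquiv.ofSet s) ≈ f := by
  refine ⟨?_, fun x _ => rfl⟩
  rw [PartialEquiv.trans_source, PartialEquiv.ofSet_source]
  exact Set.inter_eq_left.mpr (fun x hx => h (f.map_source hx))

/-- below every idempotent `ε` of `I∞↗(ℕ)` there is an idempotent `ε₀`
not lying in the bicyclic subsemigroup `C = C_ℕ(α,β)` which is the unity of a bicyclic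
subsemigroup (generated by `γ`, `δ`) disjoint from `C`. -/
theorem Imon_bicyclic_below_idempotent (ε : Imon) (hε : ε * ε = ε) :
    ∃ ε₀ γ δ : Imon,
      ε₀ * ε₀ = ε₀ ∧
      idemLE ε₀ ε ∧
      ε₀ ∉ Cbic ∧
      γ * δ = ε₀ ∧ δ * γ ≠ ε₀ ∧
      ε₀ * γ = γ ∧ γ * ε₀ = γ ∧ ε₀ * δ = δ ∧ δ * ε₀ = δ ∧
      ∀ x ∈ Subsemigroup.closure ({γ, δ} : Set Imon), x ∉ Cbic  := by
  -- extract a representative of ε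
  obtain ⟨e, he, hrep⟩ := ε.exists_rep
  subst hrep
  -- ε is the identity on its (cofinite) source
  have heq : e.trans e ≈ e := Quotient.exact (congrArg Subtype.val hε)
  have hsub : ∀ x ∈ e.source, e x ∈ e.source := by
    intro x hx
    have h := PartialEquiv.EqOnSource.source_eq heq
    rw [PartialEquiv.trans_source] at h
    rw [← h] at hx
    exact hx.2
  have hid : ∀ x ∈ e.source, e x = x := by
    intro x hx
    have h1 : e x ∈ e.source := hsub x hx
    have h2 : (e.trans e) x = e x :=
      PartialEquiv.EqOnSource.eqOn heq
        (by show x ∈ (e.trans e).source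
            rw [PartialEquiv.trans_source]
            exact ⟨hx, hsub x hx⟩)
    rw [PartialEquiv.trans_apply] at h2
    exact (e.injOn hx h1 h2.symm).symm
  obtain ⟨N, hN⟩ := exists_tail_subset he.1
  -- the underlying set of the new idempotent
  set A₀ : Set ℕ := {N} ∪ Set.Ici (N + 2) with hA0def
  have hA0fin : A₀ᶜ.Finite := by
    apply (Set.finite_Iio (N + 2)).subset
    intro z hz
    simp only [hA0def, Set.mem_compl_iff, Set.mem_union, Set.mem_singleton_iff, Set.mem_Ici,
      not_or, not_le] at hz
    simpa using hz.2
  have hA0sub : A₀ ⊆ e.source := by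
    rintro x (hx | hx)
    · simp only [Set.mem_singleton_iff] at hx
      exact hN x (by omega)
    · simp only [Set.mem_Ici] at hx
      exact hN x (by omega)
  have hNA0 : N ∈ A₀ := Or.inl rfl
  have hN1A0 : N + 1 ∉ A₀ := by
    rintro (h | h)
    · simp only [Set.mem_singleton_iff] at h; omega
    · simp only [Set.mem_Ici] at h; omega
  have hgam_src : (gamPE N).source = A₀ := rfl
  have hgam_tgt_sub : (gamPE N).target ⊆ A₀ := by
    rintro x (hx | hx)
    · exact Or.inl hx
    · simp only [Set.mem_Ici] at hx
      exact Or.inr (by simp only [Set.mem_Ici]; omega)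
  set ε₀ : Imon := ImonMk (PartialEquiv.ofSet A₀) (ofSet_good hA0fin) with hε₀def
  set γ : Imon := ImonMk (gamPE N) (gamPE_good N) with hγdef
  set δ : Imon := ImonMk (gamPE N).symm (gamPE_good N).symm with hδdef
  -- the basic multiplicative identities
  have hee : ε₀ * ε₀ = ε₀ := by
    rw [hε₀def, ImonMk_mul]
    exact ImonMk_eq (ofSet_trans_eq A₀ _ (fun x hx => hx))
  have hle1 : ε₀ * ImonMk e he = ε₀ := by
    rw [hε₀def, ImonMk_mul]
    apply ImonMk_eq
    refine ⟨?_, ?_⟩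
    · rw [PartialEquiv.trans_source, PartialEquiv.ofSet_source, PartialEquiv.ofSet_coe,
        Set.preimage_id]
      exact Set.inter_eq_left.mpr hA0sub
    · intro x hx
      rw [PartialEquiv.trans_source, PartialEquiv.ofSet_source, PartialEquiv.ofSet_coe,
        Set.preimage_id] at hx
      show e x = x
      exact hid x (hA0sub hx.1)
  have hle2 : ImonMk e he * ε₀ = ε₀ := by
    rw [hε₀def, ImonMk_mul]
    apply ImonMk_eq
    refine ⟨?_, ?_⟩
    · rw [PartialEquiv.trans_source, PartialEquiv.ofSet_source]
      ext z
      simp only [Set.mem_inter_iff, Set.mem_preimage]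
      constructor
      · rintro ⟨hz1, hz2⟩
        rwa [hid z hz1] at hz2
      · intro hz
        exact ⟨hA0sub hz, by rw [hid z (hA0sub hz)]; exact hz⟩
    · intro x hx
      rw [PartialEquiv.trans_source] at hx
      show e x = x
      exact hid x hx.1
  have hγδ : γ * δ = ε₀ := by
    rw [hγdef, hδdef, hε₀def, ImonMk_mul]
    exact ImonMk_eq (PartialEquiv.self_trans_symm (gamPE N))
  have hδγ : δ * γ ≠ ε₀ := by
    intro h
    rw [hγdef, hδdef, hε₀def, ImonMk_mul] at h
    have h2 := congrArg Imon.source h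
    rw [ImonMk_source, ImonMk_source, PartialEquiv.ofSet_source] at h2
    have h3 : N + 2 ∈ ((gamPE N).symm.trans (gamPE N)).source := by
      rw [h2]
      exact Or.inr (by simp only [Set.mem_Ici]; omega)
    rw [PartialEquiv.trans_source] at h3
    have h4 : N + 2 ∈ (gamPE N).target := h3.1
    rcases h4 with h4 | h4
    · simp only [Set.mem_singleton_iff] at h4; omega
    · simp only [Set.mem_Ici] at h4; omega
  have heγ : ε₀ * γ = γ := by
    rw [hε₀def, hγdef, ImonMk_mul]
    exact ImonMk_eq (ofSet_trans_eq A₀ _ (fun x hx => hx))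
  have hγe : γ * ε₀ = γ := by
    rw [hε₀def, hγdef, ImonMk_mul]
    exact ImonMk_eq (trans_ofSet_eq A₀ _ hgam_tgt_sub)
  have heδ : ε₀ * δ = δ := by
    rw [hε₀def, hδdef, ImonMk_mul]
    exact ImonMk_eq (ofSet_trans_eq A₀ _ hgam_tgt_sub)
  have hδe : δ * ε₀ = δ := by
    rw [hε₀def, hδdef, ImonMk_mul]
    exact ImonMk_eq (trans_ofSet_eq A₀ _ (fun x hx => hx))
  -- the invariant for the subsemigroup generated by γ and δ
  have hP : ∀ x ∈ Subsemigroup.closure ({γ, δ} : Set Imon),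
      (N, N) ∈ x.graph ∧ x.source ⊆ A₀ := by
    intro x hx
    induction hx using Subsemigroup.closure_induction with
    | mem x hx =>
      simp only [Set.mem_insert_iff, Set.mem_singleton_iff] at hx
      rcases hx with rfl | rfl
      · refine ⟨⟨Or.inl rfl, ?_⟩, fun x hx => hx⟩
        show (if N = N then N else N + 1) = N
        simp
      · refine ⟨⟨Or.inl rfl, ?_⟩, hgam_tgt_sub⟩
        show (if N = N then N else N - 1) = N
        simp
    | mul x y hx hy ihx ihy =>
      exact ⟨Imon.graph_mul ihx.1 ihy.1, fun z hz => ihx.2 (Imon.source_mul_left x y hz)⟩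
  have hdisj : ∀ x ∈ Subsemigroup.closure ({γ, δ} : Set Imon), x ∉ Cbic := by
    intro x hx hC
    obtain ⟨hg, hs⟩ := hP x hx
    obtain ⟨m, hm⟩ := Cbic_source_tail x hC
    have hNx : N ∈ x.source := Imon.graph_fst hg
    rw [hm] at hNx hs
    simp only [Set.mem_Ici] at hNx
    exact hN1A0 (hs (by simp only [Set.mem_Ici]; omega))
  have hε₀C : ε₀ ∉ Cbic := by
    apply hdisj
    rw [← hγδ]
    exact mul_mem (Subsemigroup.subset_closure (Set.mem_insert _ _))
      (Subsemigroup.subset_closure (Set.mem_insert_of_mem _ rfl))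
  exact ⟨ε₀, γ, δ, hee, ⟨hle1, hle2⟩, hε₀C, hγδ, hδγ, heγ, hγe, heδ, hδe, hdisj⟩
end

section
/- For every element λ of I∞↗(ℕ) there exist an element μ of the subsemigroup C = C_ℕ(α,β) and an idempotent ε of C such that λ * ε = μ * ε and ε * λ = ε * μ. -/
open Set

/-- The partial bijection `n ↦ n - p + q` with source `{n | p ≤ n}`. -/
def shiftPE (p q : ℕ) : PartialEquiv ℕ ℕ where
  toFun n := n - p + q
  invFun n := n - q + p
  source := {n | p ≤ n}
  target := {n | q ≤ n}
  map_source' n hn := by simp only [Set.mem_setOf_eq] at *; omega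
  map_target' n hn := by simp only [Set.mem_setOf_eq] at *; omega
  left_inv' n hn := by simp only [Set.mem_setOf_eq] at *; omega
  right_inv' n hn := by simp only [Set.mem_setOf_eq] at *; omega

lemma shiftPE_apply (p q n : ℕ) : shiftPE p q n = n - p + q := rfl

lemma shiftPE_source (p q : ℕ) : (shiftPE p q).source = {n : ℕ | p ≤ n} := rfl

lemma shiftPE_target (p q : ℕ) : (shiftPE p q).target = {n : ℕ | q ≤ n} := rfl

lemma shiftPE_good (p q : ℕ) : IsCMPB (shiftPE p q) := by
  refine ⟨?_, ?_, ?_⟩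
  · have h : ({n : ℕ | p ≤ n})ᶜ = Set.Iio p := by
      ext n; simp only [Set.mem_compl_iff, Set.mem_setOf_eq, Set.mem_Iio, not_le]
    rw [shiftPE_source, h]
    exact Set.finite_Iio p
  · have h : ({n : ℕ | q ≤ n})ᶜ = Set.Iio q := by
      ext n; simp only [Set.mem_compl_iff, Set.mem_setOf_eq, Set.mem_Iio, not_le]
    rw [shiftPE_target, h]
    exact Set.finite_Iio q
  · intro m n hm hn hmn
    simp only [shiftPE_source, Set.mem_setOf_eq] at hm hn
    simp only [shiftPE_apply]
    omega

/-- The element of `Imon` given by `shiftPE p q`. -/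
def sig (p q : ℕ) : Imon := ⟨⟦shiftPE p q⟧, shiftPE_good p q⟩

lemma sig_mul (p q r s : ℕ) :
    sig p q * sig r s = sig (p + (r - q)) (s + (q - r)) := by
  apply Subtype.ext
  show (⟦shiftPE p q⟧ * ⟦shiftPE r s⟧ : PEQ) = _
  rw [PEQ.mk_mul]
  apply Quotient.sound
  constructor
  · ext n
    simp only [PartialEquiv.trans_source, shiftPE_source, shiftPE_apply, Set.mem_inter_iff,
      Set.mem_preimage, Set.mem_setOf_eq]
    omega
  · intro n hn
    simp only [PartialEquiv.trans_source, shiftPE_source, shiftPE_apply, Set.mem_inter_iff,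
      Set.mem_preimage, Set.mem_setOf_eq] at hn
    show (shiftPE r s) ((shiftPE p q) n) = _
    simp only [shiftPE_apply]
    omega

lemma aGen_eq : aGen = sig 0 1 := by
  apply Subtype.ext
  apply Quotient.sound
  constructor
  · ext n; simp [alphaPE, shiftPE]
  · intro n _
    show n + 1 = (shiftPE 0 1) n
    simp [shiftPE]

lemma bGen_eq : bGen = sig 1 0 := by
  apply Subtype.ext
  apply Quotient.sound
  constructor
  · ext n; simp [alphaPE, shiftPE]
  · intro n _
    show n - 1 = (shiftPE 1 0) n
    simp [shiftPE]

lemma sig_mem (p q : ℕ) : sig p q ∈ Cbic := by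
  have ha : aGen ∈ Cbic := Subsemigroup.subset_closure (by simp)
  have hb : bGen ∈ Cbic := Subsemigroup.subset_closure (by simp)
  have h0q : ∀ q, sig 0 q ∈ Cbic := by
    intro q
    induction q with
    | zero =>
      have : sig 0 0 = aGen * bGen := by rw [aGen_eq, bGen_eq, sig_mul]
      rw [this]; exact Cbic.mul_mem ha hb
    | succ q ih =>
      have : sig 0 (q + 1) = sig 0 q * aGen := by
        rw [aGen_eq, sig_mul]; congr 1 <;> omega
      rw [this]; exact Cbic.mul_mem ih ha
  induction p with
  | zero => exact h0q q
  | succ p ih =>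
    have : sig (p + 1) q = bGen * sig p q := by
      rw [bGen_eq, sig_mul]; congr 1 <;> omega
    rw [this]; exact Cbic.mul_mem hb ih

/-- Any cofinite monotone partial bijection eventually has a constant shift. -/
lemma eventually_shift {e : PartialEquiv ℕ ℕ} (he : IsCMPB e) :
    ∃ T, (∀ n, T ≤ n → n ∈ e.source) ∧ (∀ n, T ≤ n → e n = e T + (n - T)) := by
  obtain ⟨h1, h2, h3⟩ := he
  -- complement of source is bounded
  obtain ⟨B, hB⟩ := h1.bddAbove
  have hsrc : ∀ n, B + 1 ≤ n → n ∈ e.source := by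
    intro n hn
    by_contra h
    have := hB h
    omega
  -- the set of "jumps" is finite
  set S : Set ℕ := {n | B + 1 ≤ n ∧ e n + 2 ≤ e (n + 1)} with hS
  have hnot : ∀ n ∈ S, e n + 1 ∉ e.target := by
    intro n hn hmem
    obtain ⟨hn1, hn2⟩ := hn
    set m := e.symm (e n + 1) with hm
    have hms : m ∈ e.source := e.map_target hmem
    have hem : e m = e n + 1 := e.right_inv hmem
    have hns : n ∈ e.source := hsrc n hn1
    have hn1s : n + 1 ∈ e.source := hsrc (n + 1) (by omega)
    have h4 : n < m := by
      by_contra h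
      rcases Nat.lt_or_ge m n with h' | h'
      · have := h3 hms hns h'; omega
      · have : m = n := by omega
        rw [this] at hem; omega
    have h5 : m < n + 1 := by
      by_contra h
      rcases Nat.lt_or_ge (n + 1) m with h' | h'
      · have := h3 hn1s hms h'; omega
      · have : m = n + 1 := by omega
        rw [this] at hem; omega
    omega
  have hSfin : S.Finite := by
    apply Set.Finite.of_finite_image (f := fun n => e n + 1)
    · apply h2.subset
      rintro _ ⟨n, hn, rfl⟩
      exact hnot n hn
    · intro a ha b hb hab
      have hab' : (e a : ℕ) + 1 = e b + 1 := hab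
      by_contra h
      rcases Nat.lt_or_ge a b with h' | h'
      · have := h3 (hsrc a ha.1) (hsrc b hb.1) h'; omega
      · have h'' : b < a := by omega
        have := h3 (hsrc b hb.1) (hsrc a ha.1) h''; omega
  obtain ⟨C, hC⟩ := hSfin.bddAbove
  set T := B + C + 2 with hT
  have hstep : ∀ n, T ≤ n → e (n + 1) = e n + 1 := by
    intro n hn
    have hnS : n ∉ S := by
      intro h
      have := hC h
      omega
    have hlt := h3 (hsrc n (by omega)) (hsrc (n + 1) (by omega)) (by omega)
    simp only [hS, Set.mem_setOf_eq, not_and, not_le] at hnS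
    have := hnS (by omega)
    omega
  refine ⟨T, fun n hn => hsrc n (by omega), ?_⟩
  intro n hn
  obtain ⟨k, rfl⟩ := Nat.exists_eq_add_of_le hn
  induction k with
  | zero => simp
  | succ k ih =>
    have : T + (k + 1) = (T + k) + 1 := by omega
    rw [this, hstep (T + k) (by omega), ih (by omega)]
    omega

/-- every `λ` in `I∞↗(ℕ)` agrees with some element `μ` of the bicyclic
subsemigroup `C = C_ℕ(α,β)` after multiplying by a suitable idempotent `ε` of `C`. -/
theorem Imon_agrees_with_bicyclic (lam : Imon) :
    ∃ μ ∈ Cbic, ∃ ε ∈ Cbic, ε * ε = ε ∧ lam * ε = μ * ε ∧ ε * lam = ε * μ := by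
  obtain ⟨q, hq⟩ := lam
  obtain ⟨e, rfl⟩ := Quotient.exists_rep q
  have he : IsCMPB e := hq
  obtain ⟨T, hTsrc, hTshift⟩ := eventually_shift he
  set N := e T + T with hN
  have hNeT : e T ≤ N := by omega
  have hNT : T ≤ N := by omega
  refine ⟨sig T (e T), sig_mem _ _, sig N N, sig_mem _ _, ?_, ?_, ?_⟩
  · rw [sig_mul]; congr 1 <;> omega
  · -- lam * ε = μ * ε
    have hrhs : sig T (e T) * sig N N = sig (T + (N - e T)) N := by
      rw [sig_mul]; congr 1; omega
    rw [hrhs]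
    apply Subtype.ext
    show (⟦e⟧ * ⟦shiftPE N N⟧ : PEQ) = _
    rw [PEQ.mk_mul]
    apply Quotient.sound
    have hsrc_eq : (e.trans (shiftPE N N)).source = {n : ℕ | T + (N - e T) ≤ n} := by
      ext n
      simp only [PartialEquiv.trans_source, shiftPE, Set.mem_inter_iff, Set.mem_preimage,
        Set.mem_setOf_eq]
      constructor
      · rintro ⟨hn1, hn2⟩
        rcases Nat.lt_or_ge n T with h | h
        · have := he.2.2 hn1 (hTsrc T le_rfl) h
          omega
        · have := hTshift n h
          omega
      · intro h
        have hnT : T ≤ n := by omega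
        have := hTshift n hnT
        exact ⟨hTsrc n hnT, by omega⟩
    constructor
    · rw [hsrc_eq]; rfl
    · intro n hn
      rw [hsrc_eq] at hn
      simp only [Set.mem_setOf_eq] at hn
      have hnT : T ≤ n := by omega
      have heq := hTshift n hnT
      show (shiftPE N N) (e n) = (shiftPE (T + (N - e T)) N) n
      simp only [shiftPE_apply]
      omega
  · -- ε * lam = ε * μ
    have hrhs : sig N N * sig T (e T) = sig N (e T + (N - T)) := by
      rw [sig_mul]; congr 1; omega
    rw [hrhs]
    apply Subtype.ext
    show (⟦shiftPE N N⟧ * ⟦e⟧ : PEQ) = _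
    rw [PEQ.mk_mul]
    apply Quotient.sound
    have hval : ∀ n : ℕ, N ≤ n → (shiftPE N N) n = n := by
      intro n hn; simp only [shiftPE_apply]; omega
    have hsrc_eq : ((shiftPE N N).trans e).source = {n : ℕ | N ≤ n} := by
      ext n
      simp only [PartialEquiv.trans_source, Set.mem_inter_iff, Set.mem_preimage]
      constructor
      · rintro ⟨hn1, _⟩
        exact hn1
      · intro h
        simp only [Set.mem_setOf_eq] at h
        refine ⟨h, ?_⟩
        rw [hval n h]
        exact hTsrc n (by omega)
    constructor
    · rw [hsrc_eq]; rfl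
    · intro n hn
      rw [hsrc_eq] at hn
      simp only [Set.mem_setOf_eq] at hn
      show e ((shiftPE N N) n) = (shiftPE N (e T + (N - T))) n
      rw [hval n hn]
      have := hTshift n (by omega)
      simp only [shiftPE_apply]
      omega
end

section
/- For every idempotent ε of I∞↗(ℕ) there exists an idempotent φ of the subsemigroup C = C_ℕ(α,β) such that φ ≤ ε in the natural partial order on idempotents. -/
open Set

lemma phi_good (k : ℕ) : IsCMPB (PartialEquiv.ofSet {n | k ≤ n}) := by
  refine ⟨?_, ?_, ?_⟩
  · apply (Set.finite_Iio k).subset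
    intro n hn
    simp only [PartialEquiv.ofSet, mem_compl_iff, mem_setOf_eq, not_le] at hn
    exact hn
  · apply (Set.finite_Iio k).subset
    intro n hn
    simp only [PartialEquiv.ofSet, mem_compl_iff, mem_setOf_eq, not_le] at hn
    exact hn
  · intro m n _ _ h
    exact h

/-- The partial identity on `{n | k ≤ n}` as an element of `Imon`. -/
def phiI (k : ℕ) : Imon := ⟨⟦PartialEquiv.ofSet {n | k ≤ n}⟧, phi_good k⟩

lemma phiI_mem (k : ℕ) : phiI k ∈ Cbic := by
  have ha : aGen ∈ Cbic := Subsemigroup.subset_closure (by simp)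
  have hb : bGen ∈ Cbic := Subsemigroup.subset_closure (by simp)
  induction k with
  | zero =>
    have : phiI 0 = aGen * bGen := by
      apply Subtype.ext
      apply (Quotient.sound ?_).symm
      constructor
      · ext x
        simp [alphaPE, PartialEquiv.trans_source]
      · intro x _
        show x + 1 - 1 = x
        omega
    rw [this]
    exact mul_mem ha hb
  | succ k ih =>
    have : phiI (k + 1) = bGen * phiI k * aGen := by
      apply Subtype.ext
      apply (Quotient.sound ?_).symm
      constructor
      · ext x
        rw [PartialEquiv.trans_source, PartialEquiv.trans_source]
        simp only [mem_inter_iff, mem_preimage, PartialEquiv.symm_source,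
          PartialEquiv.ofSet_source]
        constructor
        · rintro ⟨⟨h1, h2⟩, -⟩
          have h1' : 1 ≤ x := h1
          have h2' : k ≤ x - 1 := h2
          show k + 1 ≤ x
          omega
        · intro h
          have h' : k + 1 ≤ x := h
          refine ⟨⟨?_, ?_⟩, trivial⟩
          · show 1 ≤ x; omega
          · show k ≤ x - 1; omega
      · intro x hx
        rw [PartialEquiv.trans_source, PartialEquiv.trans_source] at hx
        have h1' : 1 ≤ x := hx.1.1
        show x - 1 + 1 = x
        omega
    rw [this]
    exact mul_mem (mul_mem hb ih) ha

lemma phiI_idem (k : ℕ) : phiI k * phiI k = phiI k := by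
  apply Subtype.ext
  apply Quotient.sound
  constructor
  · ext x
    simp [PartialEquiv.trans_source, PartialEquiv.ofSet]
  · intro x _
    rfl

/-- below every idempotent of `I∞↗(ℕ)` there is an idempotent of the
bicyclic subsemigroup `C = C_ℕ(α,β)`. -/
theorem Imon_bicyclic_idem_below (ε : Imon) (hε : ε * ε = ε) :
    ∃ φ ∈ Cbic, φ * φ = φ ∧ idemLE φ ε := by
  obtain ⟨q, hgood⟩ := ε
  induction q using Quotient.inductionOn with | h e =>
  have hgood' : IsCMPB e := hgood
  have hee : e.trans e ≈ e := Quotient.exact (congrArg Subtype.val hε)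
  have hid : ∀ x ∈ e.source, e x = x := by
    intro x hx
    have hx2 : x ∈ (e.trans e).source := hee.1 ▸ hx
    have hx3 : e x ∈ e.source := by
      rw [PartialEquiv.trans_source] at hx2
      exact hx2.2
    have h3 : e (e x) = e x := hee.2 hx2
    exact e.injOn hx3 hx h3
  obtain ⟨k, hk⟩ : ∃ k, ∀ n, k ≤ n → n ∈ e.source := by
    obtain ⟨m, hm⟩ := hgood'.1.bddAbove
    refine ⟨m + 1, fun n hn => ?_⟩
    by_contra h
    exact absurd (hm h) (by omega)
  refine ⟨phiI k, phiI_mem k, phiI_idem k, ?_, ?_⟩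
  · -- phiI k * ε = phiI k
    apply Subtype.ext
    apply Quotient.sound
    constructor
    · ext x
      simp only [PartialEquiv.trans_source, PartialEquiv.ofSet, mem_inter_iff,
        mem_preimage, mem_setOf_eq]
      constructor
      · rintro ⟨h1, -⟩; exact h1
      · intro h
        exact ⟨h, by show (x : ℕ) ∈ e.source; exact hk x h⟩
    · intro x hx
      simp only [PartialEquiv.trans_source, PartialEquiv.ofSet, mem_inter_iff,
        mem_preimage, mem_setOf_eq] at hx
      show e x = x
      exact hid x hx.2
  · -- ε * phiI k = phiI k
    apply Subtype.ext
    apply Quotient.sound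
    constructor
    · ext x
      simp only [PartialEquiv.trans_source, PartialEquiv.ofSet, mem_inter_iff,
        mem_preimage, mem_setOf_eq]
      constructor
      · rintro ⟨h1, h2⟩
        rwa [hid x h1] at h2
      · intro h
        refine ⟨hk x h, ?_⟩
        show e x ∈ {n | k ≤ n}
        rw [hid x (hk x h)]
        exact h
    · intro x hx
      simp only [PartialEquiv.trans_source, PartialEquiv.ofSet, mem_inter_iff,
        mem_preimage, mem_setOf_eq] at hx
      show e x = x
      exact hid x hx.1
end

section
/- For every element λ of I∞↗(ℕ) there exists an idempotent ε of the subsemigroup C = C_ℕ(α,β) such that both λ * ε * λ⁻¹ and λ⁻¹ * ε * λ are idempotents of C. -/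
open Set

/-- The identity partial bijection on `Set.Ici k`. -/
def idPE (k : ℕ) : PartialEquiv ℕ ℕ := PartialEquiv.ofSet (Set.Ici k)

lemma idPE_good (k : ℕ) : IsCMPB (idPE k) := by
  refine ⟨?_, ?_, ?_⟩
  · simpa [idPE] using Set.finite_Iio k
  · simpa [idPE] using Set.finite_Iio k
  · intro m n _ _ h; exact h

def epsI (k : ℕ) : Imon := ⟨⟦idPE k⟧, idPE_good k⟩

lemma idPE_trans_self (k : ℕ) : (idPE k).trans (idPE k) ≈ idPE k := by
  constructor
  · simp [idPE, PartialEquiv.trans_source]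
  · intro x _; rfl

lemma epsI_idem (k : ℕ) : epsI k * epsI k = epsI k :=
  Subtype.ext (Quotient.sound (idPE_trans_self k))

lemma alpha_trans_symm : alphaPE.trans alphaPE.symm ≈ idPE 0 := by
  have hs : (alphaPE.trans alphaPE.symm).source = Set.Ici 0 := by
    ext x
    simp [PartialEquiv.trans_source, alphaPE, idPE, PartialEquiv.symm]
  constructor
  · rw [hs]; rfl
  · intro x _
    show alphaPE.symm (alphaPE x) = idPE 0 x
    show (x + 1) - 1 = x
    omega

lemma symm_trans_idPE (k : ℕ) :
    (alphaPE.symm.trans (idPE k)).trans alphaPE ≈ idPE (k + 1) := by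
  have hs : ((alphaPE.symm.trans (idPE k)).trans alphaPE).source = Set.Ici (k + 1) := by
    ext x
    simp [PartialEquiv.trans_source, alphaPE, idPE, PartialEquiv.symm]
    omega
  constructor
  · rw [hs]; rfl
  · intro x hx
    rw [hs] at hx
    show alphaPE (idPE k (alphaPE.symm x)) = idPE (k + 1) x
    show (x - 1) + 1 = x
    simp only [Set.mem_Ici] at hx
    omega

lemma epsI_mem (k : ℕ) : epsI k ∈ Cbic := by
  have ha : aGen ∈ Cbic := Subsemigroup.subset_closure (by simp)
  have hb : bGen ∈ Cbic := Subsemigroup.subset_closure (by simp)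
  induction k with
  | zero =>
    have h : epsI 0 = aGen * bGen :=
      Subtype.ext (Quotient.sound alpha_trans_symm).symm
    rw [h]; exact mul_mem ha hb
  | succ k ih =>
    have h : epsI (k + 1) = bGen * epsI k * aGen :=
      Subtype.ext (Quotient.sound (symm_trans_idPE k)).symm
    rw [h]; exact mul_mem (mul_mem hb ih) ha

lemma conj_eq (e : PartialEquiv ℕ ℕ) (he : IsCMPB e) :
    ∃ K : ℕ, ∀ k, K ≤ k → ∃ m, (e.trans (idPE k)).trans e.symm ≈ idPE m := by
  obtain ⟨b, hb⟩ := he.1.bddAbove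
  have hN : ∀ n, b + 1 ≤ n → n ∈ e.source := by
    intro n hn
    by_contra h
    have := hb h
    omega
  set N := b + 1 with hNdef
  have hgrow : ∀ j, e N + j ≤ e (N + j) := by
    intro j
    induction j with
    | zero => simp
    | succ j ih =>
      have h1 : e (N + j) < e (N + j + 1) :=
        he.2.2 (hN _ (by omega)) (hN _ (by omega)) (by omega)
      show e N + (j + 1) ≤ e (N + j + 1)
      omega
  refine ⟨e N + 1, fun k hk => ?_⟩
  have hP : ∃ n, N ≤ n ∧ k ≤ e n := ⟨N + k, by omega, by have := hgrow k; omega⟩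
  have hsrc : ((e.trans (idPE k)).trans e.symm).source = {n | n ∈ e.source ∧ k ≤ e n} := by
    ext x
    simp only [PartialEquiv.trans_source, PartialEquiv.symm_source, Set.mem_inter_iff,
      Set.mem_preimage, Set.mem_setOf_eq, idPE, PartialEquiv.ofSet_source,
      PartialEquiv.ofSet_coe, id_eq, Set.mem_Ici, PartialEquiv.coe_trans,
      Function.comp_apply]
    constructor
    · rintro ⟨⟨h1, h2⟩, -⟩; exact ⟨h1, h2⟩
    · rintro ⟨h1, h2⟩; exact ⟨⟨h1, h2⟩, e.map_source h1⟩
  refine ⟨Nat.find hP, ?_, ?_⟩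
  · rw [hsrc]
    ext x
    simp only [Set.mem_setOf_eq, idPE, PartialEquiv.ofSet_source, Set.mem_Ici]
    constructor
    · rintro ⟨hx1, hx2⟩
      have hxN : N ≤ x := by
        by_contra h
        have : e x < e N := he.2.2 hx1 (hN N le_rfl) (by omega)
        omega
      exact Nat.find_min' hP ⟨hxN, hx2⟩
    · intro hx
      obtain ⟨h1, h2⟩ := Nat.find_spec hP
      have hxs : x ∈ e.source := hN x (by omega)
      refine ⟨hxs, ?_⟩
      rcases eq_or_lt_of_le hx with h | h
      · exact h ▸ h2
      · have : e (Nat.find hP) < e x := he.2.2 (hN _ (by omega)) hxs h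
        omega
  · intro x hx
    rw [hsrc] at hx
    show e.symm (idPE k (e x)) = idPE (Nat.find hP) x
    show e.symm (e x) = x
    exact e.left_inv hx.1



/-- for every `λ` in `I∞↗(ℕ)` there is an idempotent `ε` of the bicyclic
subsemigroup `C = C_ℕ(α,β)` such that `λ * ε * λ⁻¹` and `λ⁻¹ * ε * λ` are idempotents
of `C`. -/
theorem Imon_conjugate_idem_in_bicyclic (lam : Imon) :
    ∃ ε ∈ Cbic, ε * ε = ε ∧
      lam * ε * lam⁻¹ ∈ Cbic ∧
      (lam * ε * lam⁻¹) * (lam * ε * lam⁻¹) = lam * ε * lam⁻¹ ∧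
      lam⁻¹ * ε * lam ∈ Cbic ∧
      (lam⁻¹ * ε * lam) * (lam⁻¹ * ε * lam) = lam⁻¹ * ε * lam := by
  obtain ⟨e, hrep⟩ := Quotient.exists_rep lam.1
  have he : IsCMPB e := by
    have h := lam.2
    rw [← hrep] at h
    exact h
  obtain ⟨K, hK⟩ := conj_eq e he
  obtain ⟨K', hK'⟩ := conj_eq e.symm he.symm
  obtain ⟨m, hm⟩ := hK (max K K') (le_max_left _ _)
  obtain ⟨m', hm'⟩ := hK' (max K K') (le_max_right _ _)
  have h1 : lam * epsI (max K K') * lam⁻¹ = epsI m := by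
    apply Subtype.ext
    show lam.1 * ⟦idPE (max K K')⟧ * PEQ.symm lam.1 = ⟦idPE m⟧
    rw [← hrep]
    exact Quotient.sound hm
  have h2 : lam⁻¹ * epsI (max K K') * lam = epsI m' := by
    apply Subtype.ext
    show PEQ.symm lam.1 * ⟦idPE (max K K')⟧ * lam.1 = ⟦idPE m'⟧
    rw [← hrep]
    show (⟦(e.symm.trans (idPE (max K K'))).trans e⟧ : PEQ) = ⟦idPE m'⟧
    rw [← PartialEquiv.symm_symm e]
    exact Quotient.sound hm'
  refine ⟨epsI (max K K'), epsI_mem _, epsI_idem _, ?_, ?_, ?_, ?_⟩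
  · rw [h1]; exact epsI_mem m
  · rw [h1]; exact epsI_idem m
  · rw [h2]; exact epsI_mem m'
  · rw [h2]; exact epsI_idem m'
end
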